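/- arXiv:1602.01563 — 4 statements merged into one kernel-verified Lean document; each statement's English description precedes it below -/
import Mathlib

section
/- If E_i(t,x,x',x'') are the Euler-Lagrange expressions of a smooth Lagrangian L(t,x,x'), then for all i,j: ∂E_i/∂x'_j + ∂E_j/∂x'_i = 2 D_t(∂E_j/∂x''_i), where D_t = ∂/∂t + Σ_k x'_k ∂/∂x_k + Σ_k x''_k ∂/∂x'_k is the total time derivative operator along the jet variables. -/
/-! Every partial derivative in the identity is a directional derivative of the uncurried
Lagrangian on the jet space `ℝ × ℝⁿ × ℝⁿ` of points `(t, x, x')`. With the momenta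
`p_i = ∂L/∂x'_i`, `E_i` is affine in `x''` with coefficients `∂p_i/∂x'_k`, so `∂E_j/∂x''_i` is the
Hessian entry `∂²L/∂x'_i∂x'_j`. Differentiating `E_i` in `x'_j` and commuting the partials of the
`C²` functions `L` and `p_i` (Schwarz) turns `∂E_i/∂x'_j` into
`D_t(∂²L/∂x'_i∂x'_j) + ∂p_i/∂x_j - ∂p_j/∂x_i`, whose last part cancels in the symmetrisation. -/

open Function

variable {n : ℕ}

/-- Partial derivative w.r.t. time of a function of (t, x, x'). -/
noncomputable def pT3 (f : ℝ → (Fin n → ℝ) → (Fin n → ℝ) → ℝ) (t : ℝ) (x v : Fin n → ℝ) : ℝ :=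
  deriv (fun s => f s x v) t

/-- Partial derivative w.r.t. x_i of a function of (t, x, x'). -/
noncomputable def pX3 (f : ℝ → (Fin n → ℝ) → (Fin n → ℝ) → ℝ) (i : Fin n) (t : ℝ)
    (x v : Fin n → ℝ) : ℝ :=
  deriv (fun s => f t (Function.update x i s) v) (x i)

/-- Partial derivative w.r.t. x'_i of a function of (t, x, x'). -/
noncomputable def pV3 (f : ℝ → (Fin n → ℝ) → (Fin n → ℝ) → ℝ) (i : Fin n) (t : ℝ)
    (x v : Fin n → ℝ) : ℝ :=
  deriv (fun s => f t x (Function.update v i s)) (v i)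

/-- Partial derivative w.r.t. time of a function of (t, x, x', x''). -/
noncomputable def pT4 (F : ℝ → (Fin n → ℝ) → (Fin n → ℝ) → (Fin n → ℝ) → ℝ) (t : ℝ)
    (x v a : Fin n → ℝ) : ℝ :=
  deriv (fun s => F s x v a) t

/-- Partial derivative w.r.t. x_i of a function of (t, x, x', x''). -/
noncomputable def pX4 (F : ℝ → (Fin n → ℝ) → (Fin n → ℝ) → (Fin n → ℝ) → ℝ) (i : Fin n) (t : ℝ)
    (x v a : Fin n → ℝ) : ℝ :=
  deriv (fun s => F t (Function.update x i s) v a) (x i)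

/-- Partial derivative w.r.t. x'_i of a function of (t, x, x', x''). -/
noncomputable def pV4 (F : ℝ → (Fin n → ℝ) → (Fin n → ℝ) → (Fin n → ℝ) → ℝ) (i : Fin n) (t : ℝ)
    (x v a : Fin n → ℝ) : ℝ :=
  deriv (fun s => F t x (Function.update v i s) a) (v i)

/-- Partial derivative w.r.t. x''_i of a function of (t, x, x', x''). -/
noncomputable def pA4 (F : ℝ → (Fin n → ℝ) → (Fin n → ℝ) → (Fin n → ℝ) → ℝ) (i : Fin n) (t : ℝ)
    (x v a : Fin n → ℝ) : ℝ :=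
  deriv (fun s => F t x v (Function.update a i s)) (a i)

/-- The Euler–Lagrange expression E_i of a Lagrangian L(t,x,x'), viewed as a function of
(t, x, x', x''):  E_i = ∂²L/∂x'_i∂t + Σ_j (∂²L/∂x'_i∂x_j) x'_j + Σ_j (∂²L/∂x'_i∂x'_j) x''_j
  - ∂L/∂x_i. -/
noncomputable def EulerLagrange (L : ℝ → (Fin n → ℝ) → (Fin n → ℝ) → ℝ) (i : Fin n) (t : ℝ)
    (x v a : Fin n → ℝ) : ℝ :=
  pT3 (pV3 L i) t x v + (∑ j, pX3 (pV3 L i) j t x v * v j)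
    + (∑ j, pV3 (pV3 L i) j t x v * a j) - pX3 L i t x v

/-- The total time derivative D_t = ∂/∂t + Σ_k x'_k ∂/∂x_k + Σ_k x''_k ∂/∂x'_k acting on a
function of (t, x, x', x''). -/
noncomputable def Dt4 (F : ℝ → (Fin n → ℝ) → (Fin n → ℝ) → (Fin n → ℝ) → ℝ) (t : ℝ)
    (x v a : Fin n → ℝ) : ℝ :=
  pT4 F t x v a + (∑ k, v k * pX4 F k t x v a) + (∑ k, a k * pV4 F k t x v a)

/-- The total time derivative including the Σ_k x'''_k ∂/∂x''_k term, with x''' = b a free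
variable. -/
noncomputable def Dt5 (F : ℝ → (Fin n → ℝ) → (Fin n → ℝ) → (Fin n → ℝ) → ℝ) (b : Fin n → ℝ)
    (t : ℝ) (x v a : Fin n → ℝ) : ℝ :=
  Dt4 F t x v a + ∑ k, b k * pA4 F k t x v a

noncomputable section

section DirectionalDerivative

variable {E G : Type*} [NormedAddCommGroup E] [NormedSpace ℝ E] [NormedAddCommGroup G]
  [NormedSpace ℝ G]

def dirDeriv (w : E) (g : E → G) : E → G := fun p => fderiv ℝ g p w

theorem ContDiff.dirDeriv {g : E → G} {k m : WithTop ℕ∞} (hg : ContDiff ℝ m g) (hkm : k + 1 ≤ m)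
    (w : E) : ContDiff ℝ k (dirDeriv w g) :=
  (hg.fderiv_right hkm).clm_apply contDiff_const

theorem dirDeriv_comm {g : E → G} (hg : ContDiff ℝ 2 g) (u w : E) :
    dirDeriv u (dirDeriv w g) = dirDeriv w (dirDeriv u g) := by
  funext p
  have hd : Differentiable ℝ (fderiv ℝ g) :=
    (hg.fderiv_right (m := 1) (by norm_num)).differentiable one_ne_zero
  change fderiv ℝ (fun q => fderiv ℝ g q w) p u = fderiv ℝ (fun q => fderiv ℝ g q u) p w
  rw [fderiv_clm_apply (hd p) (differentiableAt_const w),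
    fderiv_clm_apply (hd p) (differentiableAt_const u)]
  simpa using (hg.contDiffAt.isSymmSndFDerivAt (by simp)).eq u w

theorem DifferentiableAt.hasDerivAt_comp_dirDeriv {g : E → G} {c : ℝ → E} {w : E} {s : ℝ}
    (hg : DifferentiableAt ℝ g (c s)) (hc : HasDerivAt c w s) :
    HasDerivAt (fun r => g (c r)) (dirDeriv w g (c s)) s :=
  hg.hasFDerivAt.comp_hasDerivAt s hc

end DirectionalDerivative

section SumMulUpdate

variable {ι : Type*} [Fintype ι] [DecidableEq ι]

theorem HasDerivAt.sum_mul_update {c : ι → ℝ → ℝ} {c' : ι → ℝ} {s : ℝ}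
    (hc : ∀ k, HasDerivAt (c k) (c' k) s) (v : ι → ℝ) (j : ι) :
    HasDerivAt (fun r => ∑ k, c k r * update v j r k) (∑ k, c' k * update v j s k + c j s) s := by
  simpa [Finset.sum_add_distrib, Pi.single_apply] using HasDerivAt.fun_sum (u := Finset.univ)
    fun k _ => (hc k).fun_mul (hasDerivAt_pi.1 (hasDerivAt_update v j s) k)

theorem hasDerivAt_sum_mul_update (c v : ι → ℝ) (j : ι) (s : ℝ) :
    HasDerivAt (fun r => ∑ k, c k * update v j r k) (c j) s := by
  simpa using HasDerivAt.sum_mul_update (fun k => hasDerivAt_const s (c k)) v j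

end SumMulUpdate

abbrev Jet (n : ℕ) := ℝ × (Fin n → ℝ) × (Fin n → ℝ)

def unitT : Jet n := (1, 0, 0)

def unitX (i : Fin n) : Jet n := (0, Pi.single i 1, 0)

def unitV (i : Fin n) : Jet n := (0, 0, Pi.single i 1)

section CoordinateLines

variable {G : Type*} [NormedAddCommGroup G] [NormedSpace ℝ G] {g : Jet n → G}

theorem hasDerivAt_jet_time (hg : Differentiable ℝ g) (x v : Fin n → ℝ) (s : ℝ) :
    HasDerivAt (fun r => g (r, x, v)) (dirDeriv unitT g (s, x, v)) s :=
  (hg _).hasDerivAt_comp_dirDeriv ((hasDerivAt_id s).prodMk (hasDerivAt_const s (x, v)))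

theorem hasDerivAt_jet_pos (hg : Differentiable ℝ g) (t : ℝ) (x v : Fin n → ℝ) (i : Fin n)
    (s : ℝ) :
    HasDerivAt (fun r => g (t, update x i r, v)) (dirDeriv (unitX i) g (t, update x i s, v)) s :=
  (hg _).hasDerivAt_comp_dirDeriv
    ((hasDerivAt_const s t).prodMk ((hasDerivAt_update x i s).prodMk (hasDerivAt_const s v)))

theorem hasDerivAt_jet_vel (hg : Differentiable ℝ g) (t : ℝ) (x v : Fin n → ℝ) (i : Fin n)
    (s : ℝ) :
    HasDerivAt (fun r => g (t, x, update v i r)) (dirDeriv (unitV i) g (t, x, update v i s)) s :=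
  (hg _).hasDerivAt_comp_dirDeriv
    ((hasDerivAt_const s t).prodMk ((hasDerivAt_const s x).prodMk (hasDerivAt_update v i s)))

end CoordinateLines

section CoordinatePartials

variable {g : Jet n → ℝ} (hg : Differentiable ℝ g) (t : ℝ) (x v : Fin n → ℝ)
include hg

theorem pT3_jet : pT3 (fun t x v => g (t, x, v)) t x v = dirDeriv unitT g (t, x, v) :=
  (hasDerivAt_jet_time hg x v t).deriv

theorem pX3_jet (i : Fin n) :
    pX3 (fun t x v => g (t, x, v)) i t x v = dirDeriv (unitX i) g (t, x, v) := by
  rw [pX3]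
  simpa using (hasDerivAt_jet_pos hg t x v i (x i)).deriv

theorem pV3_jet (i : Fin n) :
    pV3 (fun t x v => g (t, x, v)) i t x v = dirDeriv (unitV i) g (t, x, v) := by
  rw [pV3]
  simpa using (hasDerivAt_jet_vel hg t x v i (v i)).deriv

theorem Dt4_jet (a : Fin n → ℝ) :
    Dt4 (fun t x v _ => g (t, x, v)) t x v a =
      dirDeriv unitT g (t, x, v) + ∑ k, dirDeriv (unitX k) g (t, x, v) * v k
        + ∑ k, dirDeriv (unitV k) g (t, x, v) * a k := by
  change pT3 (fun t x v => g (t, x, v)) t x v + ∑ k, v k * pX3 (fun t x v => g (t, x, v)) k t x v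
    + ∑ k, a k * pV3 (fun t x v => g (t, x, v)) k t x v = _
  simp only [pT3_jet hg, pX3_jet hg, pV3_jet hg, mul_comm (v _), mul_comm (a _)]

end CoordinatePartials

def jetFun (f : ℝ → (Fin n → ℝ) → (Fin n → ℝ) → ℝ) : Jet n → ℝ := fun p => f p.1 p.2.1 p.2.2

def momentum (L : ℝ → (Fin n → ℝ) → (Fin n → ℝ) → ℝ) (i : Fin n) : Jet n → ℝ :=
  dirDeriv (unitV i) (jetFun L)

section EulerLagrange

variable {L : ℝ → (Fin n → ℝ) → (Fin n → ℝ) → ℝ}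

theorem pV3_eq_momentum (hL : Differentiable ℝ (jetFun L)) (i : Fin n) :
    pV3 L i = fun t x v => momentum L i (t, x, v) := by
  funext t x v
  exact pV3_jet hL t x v i

theorem eulerLagrange_eq (hL : ContDiff ℝ 2 (jetFun L)) (i : Fin n) (t : ℝ)
    (x v a : Fin n → ℝ) :
    EulerLagrange L i t x v a =
      dirDeriv unitT (momentum L i) (t, x, v)
        + ∑ k, dirDeriv (unitX k) (momentum L i) (t, x, v) * v k
        + ∑ k, dirDeriv (unitV k) (momentum L i) (t, x, v) * a k
        - dirDeriv (unitX i) (jetFun L) (t, x, v) := by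
  have hF : Differentiable ℝ (jetFun L) := hL.differentiable two_ne_zero
  have hP : Differentiable ℝ (momentum L i) :=
    (hL.dirDeriv (k := 1) (by norm_num) _).differentiable one_ne_zero
  have hX : pX3 L i t x v = dirDeriv (unitX i) (jetFun L) (t, x, v) := pX3_jet hF t x v i
  rw [EulerLagrange, pV3_eq_momentum hF, pT3_jet hP, hX]
  simp only [pX3_jet hP, pV3_jet hP]

theorem pA4_eulerLagrange (hL : ContDiff ℝ 2 (jetFun L)) (i j : Fin n) :
    (fun t x v a => pA4 (EulerLagrange L j) i t x v a)
      = fun t x v _ => dirDeriv (unitV i) (momentum L j) (t, x, v) := by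
  funext t x v a
  rw [pA4]
  simp only [eulerLagrange_eq hL]
  apply HasDerivAt.deriv
  convert ((hasDerivAt_const _ _).fun_add (hasDerivAt_sum_mul_update _ a i _)).fun_sub
    (hasDerivAt_const _ _) using 1
  simp

theorem pV4_eulerLagrange (hL : ContDiff ℝ 3 (jetFun L)) (i j : Fin n) (t : ℝ)
    (x v a : Fin n → ℝ) :
    pV4 (EulerLagrange L i) j t x v a =
      dirDeriv (unitV j) (dirDeriv unitT (momentum L i)) (t, x, v)
        + ∑ k, dirDeriv (unitV j) (dirDeriv (unitX k) (momentum L i)) (t, x, v) * v k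
        + dirDeriv (unitX j) (momentum L i) (t, x, v)
        + ∑ k, dirDeriv (unitV j) (dirDeriv (unitV k) (momentum L i)) (t, x, v) * a k
        - dirDeriv (unitV j) (dirDeriv (unitX i) (jetFun L)) (t, x, v) := by
  have hP (w : Jet n) : Differentiable ℝ (dirDeriv w (momentum L i)) :=
    ((hL.dirDeriv (k := 2) (by norm_num) _).dirDeriv (k := 1) (by norm_num) w).differentiable
      one_ne_zero
  have hF : Differentiable ℝ (dirDeriv (unitX i) (jetFun L)) :=
    (hL.dirDeriv (k := 1) (by norm_num) _).differentiable one_ne_zero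
  rw [pV4]
  simp only [eulerLagrange_eq (hL.of_le (by norm_num))]
  apply HasDerivAt.deriv
  have hvel {g : Jet n → ℝ} (hg : Differentiable ℝ g) := hasDerivAt_jet_vel hg t x v j (v j)
  convert (((hvel (hP unitT)).fun_add
    (HasDerivAt.sum_mul_update (fun k => hvel (hP (unitX k))) v j)).fun_add
    (HasDerivAt.fun_sum (u := Finset.univ) fun k _ => (hvel (hP (unitV k))).mul_const (a k))).fun_sub
    (hvel hF) using 1
  simp only [update_eq_self]
  ring

end EulerLagrange

end

/-- H3 is necessary: the Euler–Lagrange expressions of a C³ Lagrangian satisfy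
∂E_i/∂x'_j + ∂E_j/∂x'_i = 2 D_t(∂E_j/∂x''_i). -/
theorem helmholtz_H3_necessary (n : ℕ) (L : ℝ → (Fin n → ℝ) → (Fin n → ℝ) → ℝ)
    (hL : ContDiff ℝ 3 (fun p : ℝ × (Fin n → ℝ) × (Fin n → ℝ) => L p.1 p.2.1 p.2.2)) :
    ∀ (i j : Fin n) (t : ℝ) (x v a : Fin n → ℝ),
      pV4 (EulerLagrange L i) j t x v a + pV4 (EulerLagrange L j) i t x v a
        = 2 * Dt4 (fun t x v a => pA4 (EulerLagrange L j) i t x v a) t x v a := by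
  intro i j t x v a
  have hF : ContDiff ℝ 3 (jetFun L) := hL
  have hP (k : Fin n) : ContDiff ℝ 2 (momentum L k) := hF.dirDeriv (by norm_num) _
  have hPsymm (k : Fin n) (u w : Jet n) :
      dirDeriv u (dirDeriv w (momentum L k)) = dirDeriv w (dirDeriv u (momentum L k)) :=
    dirDeriv_comm (hP k) u w
  have hHess : dirDeriv (unitV j) (momentum L i) = dirDeriv (unitV i) (momentum L j) :=
    dirDeriv_comm (hF.of_le (by norm_num)) _ _
  have hMixed (k l : Fin n) :
      dirDeriv (unitV k) (dirDeriv (unitX l) (jetFun L)) = dirDeriv (unitX l) (momentum L k) :=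
    dirDeriv_comm (hF.of_le (by norm_num)) _ _
  rw [pV4_eulerLagrange hF, pV4_eulerLagrange hF, pA4_eulerLagrange (hF.of_le (by norm_num)),
    Dt4_jet (((hP j).dirDeriv (k := 1) le_rfl _).differentiable one_ne_zero)]
  simp only [hPsymm i (unitV j), hPsymm j (unitV i), hHess, hMixed]
  ring
end

section
/- Suppose F_i(t,x,x',x'') are smooth functions satisfying the third Helmholtz condition ∂F_i/∂x'_j + ∂F_j/∂x'_i = 2 D_t(∂F_j/∂x''_i), where D_t includes a term Σ_k x'''_k ∂/∂x''_k with x''' a free variable. Then each F_i is affine in the acceleration variables: there exist functions P_i(t,x,x') and Q_{ij}(t,x,x') with F_i = P_i + Σ_j Q_{ij} x''_j; equivalently, ∂²F_j/∂x''_k∂x''_i = 0 for all i,j,k. -/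
open Function

variable {n : ℕ}


section Aux

variable {n : ℕ}

/-- direction vector for the fourth slot -/
noncomputable def dirA (j : Fin n) : ℝ × (Fin n → ℝ) × (Fin n → ℝ) × (Fin n → ℝ) :=
  ((0 : ℝ), (0 : Fin n → ℝ), (0 : Fin n → ℝ), Pi.single j 1)

lemma update_eq_add (a : Fin n → ℝ) (j : Fin n) (s : ℝ) :
    Function.update a j s = Function.update a j 0 + s • (Pi.single j (1:ℝ) : Fin n → ℝ) := by
  funext i
  by_cases h : i = j
  · subst h; simp
  · simp [Function.update_of_ne h, Pi.single_eq_of_ne h]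

lemma slice_hasDerivAt {G : ℝ × (Fin n → ℝ) × (Fin n → ℝ) × (Fin n → ℝ) → ℝ}
    (hG : Differentiable ℝ G) (t : ℝ) (x v a : Fin n → ℝ) (j : Fin n) (s : ℝ) :
    HasDerivAt (fun u => G (t, x, v, Function.update a j u))
      (fderiv ℝ G (t, x, v, Function.update a j s) (dirA j)) s := by
  have hψ : HasDerivAt
      (fun u : ℝ => ((t, x, v, Function.update a j 0 + u • (Pi.single j (1:ℝ) : Fin n → ℝ)) :
        ℝ × (Fin n → ℝ) × (Fin n → ℝ) × (Fin n → ℝ))) (dirA j) s := by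
    refine (hasDerivAt_const s t).prodMk ((hasDerivAt_const s x).prodMk
      ((hasDerivAt_const s v).prodMk ?_))
    simpa using ((hasDerivAt_id s).smul_const (Pi.single j 1 : Fin n → ℝ)).const_add
      (Function.update a j 0)
  have h2 := (hG _).hasFDerivAt.comp_hasDerivAt s hψ
  simp only [← update_eq_add] at h2
  exact h2

lemma const_of_slices (h : (Fin n → ℝ) → ℝ)
    (hd : ∀ (a : Fin n → ℝ) (j : Fin n) (s : ℝ),
      HasDerivAt (fun u => h (Function.update a j u)) 0 s) (a : Fin n → ℝ) :
    h a = h 0 := by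
  have step : ∀ (a : Fin n → ℝ) (j : Fin n) (s : ℝ), h (Function.update a j s) = h a := by
    intro a j s
    have hdiff : Differentiable ℝ (fun u => h (Function.update a j u)) :=
      fun u => (hd a j u).differentiableAt
    have hz : ∀ u, deriv (fun u => h (Function.update a j u)) u = 0 :=
      fun u => (hd a j u).deriv
    have := is_const_of_deriv_eq_zero hdiff hz s (a j)
    simpa using this
  have key : ∀ S : Finset (Fin n), h (fun i => if i ∈ S then 0 else a i) = h a := by
    intro S
    induction S using Finset.induction_on with
    | empty => simp
    | insert j S hj ih =>
      have heq : (fun i => if i ∈ insert j S then (0:ℝ) else a i)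
          = Function.update (fun i => if i ∈ S then (0:ℝ) else a i) j 0 := by
        funext i
        by_cases h' : i = j
        · subst h'; simp
        · simp [Function.update_of_ne h', h', Finset.mem_insert]
      rw [heq, step, ih]
  have := key Finset.univ
  simp at this; exact this.symm

end Aux

/-- if smooth F_i satisfy the third Helmholtz condition (with the full total
derivative containing a free x''' = b), then each F_i is affine in the accelerations:
∂²F_j/∂x''_k∂x''_i = 0, and F_i = P_i(t,x,x') + Σ_j Q_{ij}(t,x,x') x''_j. -/
theorem helmholtz_H3_implies_affine_in_acceleration (n : ℕ)
    (F : Fin n → ℝ → (Fin n → ℝ) → (Fin n → ℝ) → (Fin n → ℝ) → ℝ)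
    (hF : ∀ i, ContDiff ℝ (⊤ : ℕ∞) (fun p : ℝ × (Fin n → ℝ) × (Fin n → ℝ) × (Fin n → ℝ) =>
      F i p.1 p.2.1 p.2.2.1 p.2.2.2))
    (hH3 : ∀ (i j : Fin n) (b : Fin n → ℝ) (t : ℝ) (x v a : Fin n → ℝ),
      pV4 (F i) j t x v a + pV4 (F j) i t x v a
        = 2 * Dt5 (fun t x v a => pA4 (F j) i t x v a) b t x v a) :
    (∀ (i j k : Fin n) (t : ℝ) (x v a : Fin n → ℝ),
        pA4 (fun t x v a => pA4 (F j) i t x v a) k t x v a = 0) ∧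
    (∃ (P : Fin n → ℝ → (Fin n → ℝ) → (Fin n → ℝ) → ℝ)
       (Q : Fin n → Fin n → ℝ → (Fin n → ℝ) → (Fin n → ℝ) → ℝ),
      ∀ (i : Fin n) (t : ℝ) (x v a : Fin n → ℝ),
        F i t x v a = P i t x v + ∑ j, Q i j t x v * a j) := by
  classical
  have part1 : ∀ (i j k : Fin n) (t : ℝ) (x v a : Fin n → ℝ),
      pA4 (fun t x v a => pA4 (F j) i t x v a) k t x v a = 0 := by
    intro i j k t x v a
    have h1 := hH3 i j (Pi.single k 1) t x v a
    have h0 := hH3 i j 0 t x v a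
    simp only [Dt5] at h1 h0
    have hs0 : (∑ k', (0 : Fin n → ℝ) k' *
        pA4 (fun t x v a => pA4 (F j) i t x v a) k' t x v a) = 0 := by simp
    have hsk : (∑ k', (Pi.single k 1 : Fin n → ℝ) k' *
        pA4 (fun t x v a => pA4 (F j) i t x v a) k' t x v a)
        = pA4 (fun t x v a => pA4 (F j) i t x v a) k t x v a := by
      simp [Pi.single_apply, ite_mul]
    rw [hsk] at h1
    rw [hs0] at h0
    linarith
  refine ⟨part1, ⟨fun i t x v => F i t x v 0,
    fun i j t x v => pA4 (F i) j t x v 0, ?_⟩⟩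
  intro i t x v a
  have hGc : ContDiff ℝ (⊤ : ℕ∞) (fun p : ℝ × (Fin n → ℝ) × (Fin n → ℝ) × (Fin n → ℝ) =>
      F i p.1 p.2.1 p.2.2.1 p.2.2.2) := hF i
  have hGd : Differentiable ℝ (fun p : ℝ × (Fin n → ℝ) × (Fin n → ℝ) × (Fin n → ℝ) =>
      F i p.1 p.2.1 p.2.2.1 p.2.2.2) := hGc.differentiable (by simp)
  have hpA4 : ∀ (j : Fin n) (t : ℝ) (x v a : Fin n → ℝ),
      pA4 (F i) j t x v a
        = fderiv ℝ (fun p : ℝ × (Fin n → ℝ) × (Fin n → ℝ) × (Fin n → ℝ) =>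
            F i p.1 p.2.1 p.2.2.1 p.2.2.2) (t, x, v, a) (dirA j) := by
    intro j t x v a
    have h := (slice_hasDerivAt hGd t x v a j (a j)).deriv
    rw [Function.update_eq_self] at h
    simpa [pA4] using h
  have hDGd : ∀ j : Fin n, Differentiable ℝ
      (fun p : ℝ × (Fin n → ℝ) × (Fin n → ℝ) × (Fin n → ℝ) =>
        fderiv ℝ (fun p : ℝ × (Fin n → ℝ) × (Fin n → ℝ) × (Fin n → ℝ) =>
          F i p.1 p.2.1 p.2.2.1 p.2.2.2) p (dirA j)) :=
    fun j => (((hGc.fderiv_right (m := 1) (WithTop.coe_le_coe.mpr le_top)).clm_apply contDiff_const).differentiable one_ne_zero)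
  have hQ : ∀ (j : Fin n) (a : Fin n → ℝ),
      pA4 (F i) j t x v a = pA4 (F i) j t x v 0 := by
    intro j a
    rw [hpA4, hpA4]
    refine const_of_slices (fun a =>
      fderiv ℝ (fun p : ℝ × (Fin n → ℝ) × (Fin n → ℝ) × (Fin n → ℝ) =>
        F i p.1 p.2.1 p.2.2.1 p.2.2.2) (t, x, v, a) (dirA j)) ?_ a
    intro a k s
    have h1 := slice_hasDerivAt (hDGd j) t x v a k s
    have h3 : deriv (fun u => pA4 (F i) j t x v
        (Function.update (Function.update a k s) k u)) ((Function.update a k s) k) = 0 :=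
      part1 j i k t x v (Function.update a k s)
    simp only [Function.update_idem, Function.update_self] at h3
    have h4 : (fun u => pA4 (F i) j t x v (Function.update a k u))
        = fun u => fderiv ℝ (fun p : ℝ × (Fin n → ℝ) × (Fin n → ℝ) × (Fin n → ℝ) =>
            F i p.1 p.2.1 p.2.2.1 p.2.2.2) (t, x, v, Function.update a k u) (dirA j) := by
      funext u; rw [hpA4]
    rw [h4] at h3
    have h5 := h1.deriv
    rw [h3] at h5
    rw [← h5] at h1
    exact h1
  have hfinal := const_of_slices (fun a => F i t x v a
      - ∑ j, pA4 (F i) j t x v 0 * a j) ?_ a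
  · have hz : (∑ j, pA4 (F i) j t x v 0 * (0 : Fin n → ℝ) j) = 0 := by simp
    simp only [hz] at hfinal
    have : F i t x v a - ∑ j, pA4 (F i) j t x v 0 * a j
        = F i t x v 0 - 0 := hfinal
    linarith [this]
  · intro a k s
    have h1 := slice_hasDerivAt hGd t x v a k s
    have hFval : fderiv ℝ (fun p : ℝ × (Fin n → ℝ) × (Fin n → ℝ) × (Fin n → ℝ) =>
        F i p.1 p.2.1 p.2.2.1 p.2.2.2) (t, x, v, Function.update a k s) (dirA k)
        = pA4 (F i) k t x v 0 := by
      rw [← hpA4, hQ]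
    rw [hFval] at h1
    have hterm : ∀ j : Fin n, HasDerivAt
        (fun u => pA4 (F i) j t x v 0 * Function.update a k u j)
        (if j = k then pA4 (F i) j t x v 0 else 0) s := by
      intro j
      by_cases hjk : j = k
      · subst hjk
        simp only [Function.update_self, if_pos rfl]
        simpa using (hasDerivAt_id s).const_mul (pA4 (F i) j t x v 0)
      · simp only [if_neg hjk]
        have heq : (fun u => pA4 (F i) j t x v 0 * Function.update a k u j)
            = fun _ => pA4 (F i) j t x v 0 * a j := by
          funext u; rw [Function.update_of_ne hjk]
        rw [heq]
        exact hasDerivAt_const s _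
    have hsum := HasDerivAt.fun_sum (fun j (_ : j ∈ Finset.univ) => hterm j)
    have hsum' : HasDerivAt (fun u => ∑ j, pA4 (F i) j t x v 0 * Function.update a k u j)
        (pA4 (F i) k t x v 0) s := by
      simpa using hsum
    have hcomb := h1.fun_sub hsum'
    simpa using hcomb
end

section
/- Let F_i = P_i(t,x,x') + Σ_j Q_{ij}(t,x,x') x''_j with Q symmetric, satisfying the second Helmholtz condition ∂F_i/∂x_j - ∂F_j/∂x_i = (1/2) D_t(∂F_i/∂x'_j - ∂F_j/∂x'_i) identically in (t,x,x',x'',x'''). Then ∂Q_{ik}/∂x'_j = ∂Q_{jk}/∂x'_i for all i,j,k (the coefficient of x'''_k on the right-hand side must vanish). -/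
open Function

variable {n : ℕ}

/-- if F_i = P_i + Σ_j Q_{ij} x''_j with Q symmetric satisfies the second
Helmholtz condition identically in (t,x,x',x'',x'''), then ∂Q_{ik}/∂x'_j = ∂Q_{jk}/∂x'_i. -/
theorem helmholtz_H2_implies_Q_vel_symmetric (n : ℕ)
    (P : Fin n → ℝ → (Fin n → ℝ) → (Fin n → ℝ) → ℝ)
    (Q : Fin n → Fin n → ℝ → (Fin n → ℝ) → (Fin n → ℝ) → ℝ)
    (hP : ∀ i, ContDiff ℝ (⊤ : ℕ∞) (fun p : ℝ × (Fin n → ℝ) × (Fin n → ℝ) => P i p.1 p.2.1 p.2.2))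
    (hQ : ∀ i j, ContDiff ℝ (⊤ : ℕ∞) (fun p : ℝ × (Fin n → ℝ) × (Fin n → ℝ) => Q i j p.1 p.2.1 p.2.2))
    (hQsym : ∀ (i j : Fin n) (t : ℝ) (x v : Fin n → ℝ), Q i j t x v = Q j i t x v)
    (F : Fin n → ℝ → (Fin n → ℝ) → (Fin n → ℝ) → (Fin n → ℝ) → ℝ)
    (hFdef : ∀ (i : Fin n) (t : ℝ) (x v a : Fin n → ℝ),
      F i t x v a = P i t x v + ∑ j, Q i j t x v * a j)
    (hH2 : ∀ (i j : Fin n) (b : Fin n → ℝ) (t : ℝ) (x v a : Fin n → ℝ),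
      pX4 (F i) j t x v a - pX4 (F j) i t x v a
        = (1 / 2) * Dt5 (fun t x v a => pV4 (F i) j t x v a - pV4 (F j) i t x v a) b t x v a) :
    ∀ (i j k : Fin n) (t : ℝ) (x v : Fin n → ℝ),
      pV3 (Q i k) j t x v = pV3 (Q j k) i t x v := by

  classical
  intro i j k t x v
  -- differentiability of sections of smooth functions
  have hdiff : ∀ (f : ℝ → (Fin n → ℝ) → (Fin n → ℝ) → ℝ),
      ContDiff ℝ (⊤ : ℕ∞) (fun p : ℝ × (Fin n → ℝ) × (Fin n → ℝ) => f p.1 p.2.1 p.2.2) →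
      ∀ (j : Fin n) (t : ℝ) (x v : Fin n → ℝ),
      DifferentiableAt ℝ (fun s => f t x (Function.update v j s)) (v j) := by
    intro f hf j t x v
    have h : ContDiff ℝ (⊤ : ℕ∞) (fun s : ℝ => f t x (Function.update v j s)) :=
      hf.comp (contDiff_const.prodMk (contDiff_const.prodMk (contDiff_update ((⊤ : ℕ∞) : WithTop ℕ∞) v j)))
    exact h.differentiable (by simp) _
  -- formula for pV4 (F i) j
  have hV4 : ∀ (i j : Fin n) (t : ℝ) (x v a : Fin n → ℝ),
      pV4 (F i) j t x v a
        = pV3 (P i) j t x v + ∑ m, pV3 (Q i m) j t x v * a m := by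
    intro i j t x v a
    have h1 : DifferentiableAt ℝ (fun s => P i t x (Function.update v j s)) (v j) :=
      hdiff _ (hP i) j t x v
    have h2 : ∀ m ∈ Finset.univ,
        DifferentiableAt ℝ (fun s => Q i m t x (Function.update v j s) * a m) (v j) :=
      fun m _ => (hdiff _ (hQ i m) j t x v).mul_const _
    unfold pV4 pV3
    simp only [hFdef]
    rw [deriv_fun_add h1 (DifferentiableAt.fun_sum h2), deriv_fun_sum h2]
    congr 1
    exact Finset.sum_congr rfl fun m _ => deriv_mul_const (hdiff _ (hQ i m) j t x v) (a m)
  set G : ℝ → (Fin n → ℝ) → (Fin n → ℝ) → (Fin n → ℝ) → ℝ :=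
    fun t x v a => pV4 (F i) j t x v a - pV4 (F j) i t x v a with hG
  -- derivative of the affine function of s
  have key : ∀ (d : Fin n → ℝ) (a : Fin n → ℝ),
      HasDerivAt (fun s => ∑ m, d m * Function.update a k s m) (d k) (a k) := by
    intro d a
    have h : ∀ m ∈ Finset.univ, HasDerivAt (fun s => d m * Function.update a k s m)
        (if m = k then d m else 0) (a k) := by
      intro m _
      rcases eq_or_ne m k with rfl | hm
      · simp only [Function.update_self, if_pos rfl]
        simpa using (hasDerivAt_id (a m)).const_mul (d m)
      · simp only [Function.update_of_ne hm, if_neg hm]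
        exact hasDerivAt_const _ _
    have := HasDerivAt.fun_sum h
    simpa [Finset.sum_ite_eq'] using this
  -- compute pA4 G k
  have hA : ∀ a : Fin n → ℝ, pA4 G k t x v a
      = pV3 (Q i k) j t x v - pV3 (Q j k) i t x v := by
    intro a
    unfold pA4
    have hfun : (fun s => G t x v (Function.update a k s))
        = fun s => (pV3 (P i) j t x v + ∑ m, pV3 (Q i m) j t x v * Function.update a k s m)
          - (pV3 (P j) i t x v + ∑ m, pV3 (Q j m) i t x v * Function.update a k s m) := by
      funext s
      simp only [hG, hV4]
    rw [hfun]
    have h := (((hasDerivAt_const (a k) (pV3 (P i) j t x v)).fun_add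
        (key (fun m => pV3 (Q i m) j t x v) a)).fun_sub
        ((hasDerivAt_const (a k) (pV3 (P j) i t x v)).fun_add
        (key (fun m => pV3 (Q j m) i t x v) a)))
    have := h.deriv
    simpa using this
  -- H2 with b = single k 1 and b = 0 forces pA4 G k = 0
  have h1 := hH2 i j (Pi.single k 1) t x v 0
  have h0 := hH2 i j 0 t x v 0
  have heq := h0.symm.trans h1
  simp only [Dt5, ← hG] at heq
  have e1 : ∑ m, (Pi.single k 1 : Fin n → ℝ) m * pA4 G m t x v 0
      = pA4 G k t x v 0 := by
    simp [Pi.single_apply, ite_mul, Finset.sum_ite_eq']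
  rw [e1] at heq
  simp only [Pi.zero_apply, zero_mul, Finset.sum_const_zero] at heq
  have hz : pA4 G k t x v 0 = 0 := by linarith
  have := hA 0
  rw [hz] at this
  linarith
end

section
/- Let G(t,x,x') be smooth and suppose Λ(t,x,x') > 0 satisfies D_t Λ = Λ · ∂G/∂x' along solutions of x'' = −G (i.e. with x'' replaced by −G in D_t). Then F(t,x,x',x'') := Λ(t,x,x')·(x'' + G(t,x,x')) satisfies the one-dimensional third Helmholtz condition ∂F/∂x' = D_t(∂F/∂x'') at all points with x'' = −G(t,x,x'). -/
/-- Partial derivative w.r.t. t of a function of (t, x, x', x''). -/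
noncomputable def pT (F : ℝ → ℝ → ℝ → ℝ → ℝ) (t x v a : ℝ) : ℝ := deriv (fun s => F s x v a) t

/-- Partial derivative w.r.t. x of a function of (t, x, x', x''). -/
noncomputable def pX (F : ℝ → ℝ → ℝ → ℝ → ℝ) (t x v a : ℝ) : ℝ := deriv (fun s => F t s v a) x

/-- Partial derivative w.r.t. x' of a function of (t, x, x', x''). -/
noncomputable def pV (F : ℝ → ℝ → ℝ → ℝ → ℝ) (t x v a : ℝ) : ℝ := deriv (fun s => F t x s a) v

/-- Partial derivative w.r.t. x'' of a function of (t, x, x', x''). -/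
noncomputable def pA (F : ℝ → ℝ → ℝ → ℝ → ℝ) (t x v a : ℝ) : ℝ := deriv (fun s => F t x v s) a

/-- Total time derivative D_t = ∂/∂t + x'∂/∂x + x''∂/∂x' + x'''∂/∂x'' on a function of
(t, x, x', x''), with x''' = b a free variable. -/
noncomputable def Dt (F : ℝ → ℝ → ℝ → ℝ → ℝ) (b t x v a : ℝ) : ℝ :=
  pT F t x v a + v * pX F t x v a + a * pV F t x v a + b * pA F t x v a

/-- Partial derivative w.r.t. t of a function of (t, x, x'). -/
noncomputable def qT (L : ℝ → ℝ → ℝ → ℝ) (t x v : ℝ) : ℝ := deriv (fun s => L s x v) t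

/-- Partial derivative w.r.t. x of a function of (t, x, x'). -/
noncomputable def qX (L : ℝ → ℝ → ℝ → ℝ) (t x v : ℝ) : ℝ := deriv (fun s => L t s v) x

/-- Partial derivative w.r.t. x' of a function of (t, x, x'). -/
noncomputable def qV (L : ℝ → ℝ → ℝ → ℝ) (t x v : ℝ) : ℝ := deriv (fun s => L t x s) v

/-- The one-dimensional Euler–Lagrange expression of L(t,x,x'):
E = ∂²L/∂x'∂t + (∂²L/∂x'∂x)x' + (∂²L/∂x'²)x'' - ∂L/∂x. -/
noncomputable def EL1 (L : ℝ → ℝ → ℝ → ℝ) (t x v a : ℝ) : ℝ :=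
  qT (qV L) t x v + qX (qV L) t x v * v + qV (qV L) t x v * a - qX L t x v

/-- if Λ > 0 satisfies the Jacobi-last-multiplier equation D_tΛ = Λ ∂G/∂x'
along solutions of x'' = −G, then F = Λ·(x'' + G) satisfies the one-dimensional third
Helmholtz condition ∂F/∂x' = D_t(∂F/∂x'') at all points with x'' = −G. -/
theorem jacobi_last_multiplier_H3 (G Λ : ℝ → ℝ → ℝ → ℝ)
    (hG : ContDiff ℝ (⊤ : ℕ∞) (fun p : ℝ × ℝ × ℝ => G p.1 p.2.1 p.2.2))
    (hΛ : ContDiff ℝ (⊤ : ℕ∞) (fun p : ℝ × ℝ × ℝ => Λ p.1 p.2.1 p.2.2))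
    (hΛpos : ∀ t x v : ℝ, 0 < Λ t x v)
    (hJLM : ∀ t x v : ℝ,
      qT Λ t x v + v * qX Λ t x v + (-(G t x v)) * qV Λ t x v = Λ t x v * qV G t x v)
    (F : ℝ → ℝ → ℝ → ℝ → ℝ)
    (hFdef : ∀ t x v a : ℝ, F t x v a = Λ t x v * (a + G t x v)) :
    ∀ t x v a : ℝ, a = -(G t x v) →
      pV F t x v a
        = pT (fun t x v a => pA F t x v a) t x v a
          + v * pX (fun t x v a => pA F t x v a) t x v a
          + a * pV (fun t x v a => pA F t x v a) t x v a := by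
  intro t x v a ha
  -- differentiability of the slices
  have hGv : ∀ t x v : ℝ, HasDerivAt (fun s => G t x s) (qV G t x v) v := by
    intro t x v
    have h : DifferentiableAt ℝ (fun s => G t x s) v := by
      have := (hG.differentiable (by simp)).differentiableAt
        (x := (t, x, v)) |>.comp v (f := fun s : ℝ => (t, x, s))
        (DifferentiableAt.prodMk (differentiableAt_const t) (DifferentiableAt.prodMk (differentiableAt_const x) differentiableAt_fun_id))
      exact this
    simpa [qV] using h.hasDerivAt
  have hΛv : ∀ t x v : ℝ, HasDerivAt (fun s => Λ t x s) (qV Λ t x v) v := by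
    intro t x v
    have h : DifferentiableAt ℝ (fun s => Λ t x s) v := by
      have := (hΛ.differentiable (by simp)).differentiableAt
        (x := (t, x, v)) |>.comp v (f := fun s : ℝ => (t, x, s))
        (DifferentiableAt.prodMk (differentiableAt_const t) (DifferentiableAt.prodMk (differentiableAt_const x) differentiableAt_fun_id))
      exact this
    simpa [qV] using h.hasDerivAt
  -- pA F = Λ
  have hpA : ∀ t x v a : ℝ, pA F t x v a = Λ t x v := by
    intro t x v a
    have : (fun s => F t x v s) = fun s => Λ t x v * (s + G t x v) := by
      funext s; exact hFdef t x v s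
    rw [pA, this]
    have h1 : HasDerivAt (fun s : ℝ => Λ t x v * (s + G t x v)) (Λ t x v * 1) a :=
      ((hasDerivAt_id a).add_const (G t x v)).const_mul (Λ t x v)
    simpa using h1.deriv
  -- LHS
  have hLHS : pV F t x v a = qV Λ t x v * (a + G t x v) + Λ t x v * qV G t x v := by
    have : (fun s => F t x s a) = fun s => Λ t x s * (a + G t x s) := by
      funext s; exact hFdef t x s a
    rw [pV, this]
    have h1 : HasDerivAt (fun s => Λ t x s * (a + G t x s))
        (qV Λ t x v * (a + G t x v) + Λ t x v * (0 + qV G t x v)) v :=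
      (hΛv t x v).mul ((hasDerivAt_const v a).add (hGv t x v))
    simpa using h1.deriv
  -- RHS pieces
  have hT : pT (fun t x v a => pA F t x v a) t x v a = qT Λ t x v := by
    simp only [pT, qT, hpA]
  have hX : pX (fun t x v a => pA F t x v a) t x v a = qX Λ t x v := by
    simp only [pX, qX, hpA]
  have hV : pV (fun t x v a => pA F t x v a) t x v a = qV Λ t x v := by
    simp only [pV, qV, hpA]
  rw [hLHS, hT, hX, hV, ha]
  have := hJLM t x v
  ring_nf
  ring_nf at this
  linarith [this]
end
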